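/- Let (A, B) be a two-player weighted potential game with potential φ and weights w₁ = w₂ = 1 (an exact potential game), and let (x, y) be a trajectory of the two-player SQL dynamics for parameters α₁, α₂ ∈ [0,1), β₁, β₂ > 0. Define r^H_{1,i}(t) := β₁ (A y(t))_i − α₁(ln x_i(t) + 1) and r^H_{2,j}(t) := β₂ (x(t)ᵀ B)_j − α₂(ln y_j(t) + 1), and the modified potential Φ^H(x,y) := ∑_{i,j} φ_{ij} x_i y_j + (α₁/β₁) H(x) + (α₂/β₂) H(y) with H(z) = −∑_l z_l ln z_l. Then for every t ≥ 0, d/dt Φ^H(x(t), y(t)) = (1/β₁)·[∑_i x_i(t) (r^H_{1,i}(t))² − (∑_i x_i(t) r^H_{1,i}(t))²] + (1/β₂)·[∑_j y_j(t) (r^H_{2,j}(t))² − (∑_j y_j(t) r^H_{2,j}(t))²]. -/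

import Mathlib

/-!
Along the dynamics each velocity has the replicator form `ẋᵢ = xᵢ (rᵢ - ⟨x, r⟩)` in the modified
reward `r = r^H`, so `∑ᵢ ẋᵢ = 0` and `∑ᵢ ẋᵢ rᵢ` is the variance of `r` under `x`. Since
`∑ᵢ ẋᵢ = 0` and `A - φ` is constant along the rows (an exact potential), the partial derivative
of the potential term may be replaced by the payoff `A y`; together with `(z log z)' = ż (log z + 1)`
the `x`-part of `dΦ^H/dt` becomes `(1/β₁) ∑ᵢ ẋᵢ rᵢ`, and likewise for `y`.
-/

open Filter Real

open Finset

section Simplex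

variable {ι : Type*} [Fintype ι]

theorem sum_mul_centered_eq_zero (x r : ι → ℝ) (hx : ∑ i, x i = 1) :
    ∑ i, x i * (r i - ∑ k, x k * r k) = 0 := by
  simp only [mul_sub, sum_sub_distrib, ← sum_mul, hx, one_mul, sub_self]

theorem sum_mul_centered_mul_self (x r : ι → ℝ) :
    ∑ i, x i * (r i - ∑ k, x k * r k) * r i = ∑ i, x i * r i ^ 2 - (∑ i, x i * r i) ^ 2 := by
  have hr : ∀ i, x i * (r i - ∑ k, x k * r k) * r i
      = x i * r i ^ 2 - x i * r i * ∑ k, x k * r k := fun i => by ring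
  simp only [hr, sum_sub_distrib, ← sum_mul]
  ring

theorem sum_mul_eq_sum_mul_of_sub_eq_sub {u f g : ι → ℝ} (hu : ∑ i, u i = 0)
    (hfg : ∀ i i', f i - f i' = g i - g i') : ∑ i, u i * f i = ∑ i, u i * g i := by
  rcases isEmpty_or_nonempty ι with hι | ⟨⟨i₀⟩⟩
  · simp
  · have hconst : ∀ i, u i * f i = u i * g i + u i * (f i₀ - g i₀) := fun i => by
      linear_combination u i * hfg i i₀
    simp only [hconst, sum_add_distrib, ← sum_mul, hu, zero_mul, add_zero]

theorem sum_sum_mul_mul_eq_sum_mul_sum_left {κ : Type*} [Fintype κ] (x : ι → ℝ) (M : ι → κ → ℝ)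
    (y : κ → ℝ) : ∑ i, ∑ j, x i * M i j * y j = ∑ i, x i * ∑ j, M i j * y j := by
  simp only [mul_sum, mul_assoc]

theorem sum_sum_mul_mul_eq_sum_mul_sum_right {κ : Type*} [Fintype κ] (x : ι → ℝ) (M : ι → κ → ℝ)
    (y : κ → ℝ) : ∑ i, ∑ j, x i * M i j * y j = ∑ j, y j * ∑ i, x i * M i j := by
  rw [sum_comm]
  simp only [mul_comm (y _), sum_mul]

end Simplex

section Derivatives

variable {ι₁ ι₂ : Type*} [Fintype ι₁] [Fintype ι₂] {t : ℝ}

theorem hasDerivAt_sum_mul_log {x : ℝ → ι₁ → ℝ} {u : ι₁ → ℝ}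
    (hx : ∀ i, HasDerivAt (fun s => x s i) (u i) t) (hx₀ : ∀ i, x t i ≠ 0) :
    HasDerivAt (fun s => ∑ i, x s i * log (x s i)) (∑ i, u i * (log (x t i) + 1)) t :=
  HasDerivAt.fun_sum fun i _ => by
    rw [mul_comm]
    exact (hasDerivAt_mul_log (hx₀ i)).comp t (hx i)

theorem hasDerivAt_sum_sum_mul_mul (φ : ι₁ → ι₂ → ℝ) {x : ℝ → ι₁ → ℝ} {y : ℝ → ι₂ → ℝ}
    {u : ι₁ → ℝ} {v : ι₂ → ℝ} (hx : ∀ i, HasDerivAt (fun s => x s i) (u i) t)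
    (hy : ∀ j, HasDerivAt (fun s => y s j) (v j) t) :
    HasDerivAt (fun s => ∑ i, ∑ j, φ i j * x s i * y s j)
      (∑ i, u i * ∑ j, φ i j * y t j + ∑ j, v j * ∑ i, x t i * φ i j) t := by
  refine (HasDerivAt.fun_sum (u := univ) fun i _ => HasDerivAt.fun_sum (u := univ) fun j _ =>
    ((hx i).const_mul (φ i j)).fun_mul (hy j)).congr_deriv ?_
  simp only [sum_add_distrib, mul_sum]
  rw [sum_comm (f := fun j i => v j * (x t i * φ i j))]
  congr 1 <;> refine sum_congr rfl fun i _ => sum_congr rfl fun j _ => by ring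

end Derivatives

section SQL

variable {ι : Type*} [Fintype ι]

noncomputable def modifiedReward (α β : ℝ) (a x : ι → ℝ) (i : ι) : ℝ :=
  β * a i - α * (log (x i) + 1)

theorem sql_velocity_eq_centered {x : ι → ℝ} (hx : ∑ i, x i = 1) (α β : ℝ) (a : ι → ℝ) (i : ι) :
    x i * (β * (a i - ∑ k, x k * a k) - α * (log (x i) - ∑ k, x k * log (x k)))
      = x i * (modifiedReward α β a x i - ∑ k, x k * modifiedReward α β a x k) := by
  have hmean : ∑ k, x k * modifiedReward α β a x k
      = β * ∑ k, x k * a k - α * ∑ k, x k * log (x k) - α := by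
    have hk : ∀ k, x k * modifiedReward α β a x k
        = β * (x k * a k) - α * (x k * log (x k)) - α * x k := fun k => by
      unfold modifiedReward; ring
    simp only [hk, sum_sub_distrib, ← mul_sum, hx, mul_one]
  rw [hmean, modifiedReward]
  ring

theorem sum_eq_zero_of_sql_velocity {x a u : ι → ℝ} (hx : ∑ i, x i = 1) {α β : ℝ}
    (hu : ∀ i, u i = x i * (β * (a i - ∑ k, x k * a k) - α * (log (x i) - ∑ k, x k * log (x k)))) :
    ∑ i, u i = 0 := by
  simp only [hu, sql_velocity_eq_centered hx]
  exact sum_mul_centered_eq_zero _ _ hx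

theorem sql_payoff_entropy_rate_eq_variance {x a u : ι → ℝ} (hx : ∑ i, x i = 1) {α β : ℝ}
    (hβ : β ≠ 0)
    (hu : ∀ i, u i = x i * (β * (a i - ∑ k, x k * a k) - α * (log (x i) - ∑ k, x k * log (x k)))) :
    ∑ i, u i * a i + α / β * -∑ i, u i * (log (x i) + 1)
      = 1 / β * (∑ i, x i * modifiedReward α β a x i ^ 2
          - (∑ i, x i * modifiedReward α β a x i) ^ 2) := by
  have hrate : ∑ i, u i * modifiedReward α β a x i
      = β * ∑ i, u i * a i - α * ∑ i, u i * (log (x i) + 1) := by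
    simp only [modifiedReward, mul_sub, sum_sub_distrib, mul_sum]
    congr 1 <;> exact sum_congr rfl fun i _ => by ring
  have hvar : ∑ i, u i * modifiedReward α β a x i
      = ∑ i, x i * modifiedReward α β a x i ^ 2 - (∑ i, x i * modifiedReward α β a x i) ^ 2 := by
    simp only [hu, sql_velocity_eq_centered hx]
    exact sum_mul_centered_mul_self _ _
  field_simp
  linear_combination hvar - hrate

end SQL

theorem sql_modified_potential_derivative_variance_general
    {ι₁ ι₂ : Type*} [Fintype ι₁] [Fintype ι₂]
    (A B φ : ι₁ → ι₂ → ℝ)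
    (hpotA : ∀ i i' j, A i j - A i' j = 1 * (φ i j - φ i' j))
    (hpotB : ∀ i j j', B i j - B i j' = 1 * (φ i j - φ i j'))
    (α₁ α₂ β₁ β₂ : ℝ)
    (hβ₁ : 0 < β₁) (hβ₂ : 0 < β₂)
    (x : ℝ → ι₁ → ℝ) (y : ℝ → ι₂ → ℝ)
    (hxdiff : ∀ i, Differentiable ℝ fun t => x t i)
    (hydiff : ∀ j, Differentiable ℝ fun t => y t j)
    (hxpos : ∀ t ≥ (0 : ℝ), ∀ i, 0 < x t i)
    (hypos : ∀ t ≥ (0 : ℝ), ∀ j, 0 < y t j)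
    (hxsum : ∀ t ≥ (0 : ℝ), ∑ i, x t i = 1)
    (hysum : ∀ t ≥ (0 : ℝ), ∑ j, y t j = 1)
    (hodex : ∀ t ≥ (0 : ℝ), ∀ i, deriv (fun s => x s i) t =
      x t i * (β₁ * ((∑ j, A i j * y t j) - ∑ i', ∑ j, x t i' * A i' j * y t j)
        - α₁ * (Real.log (x t i) - ∑ i', x t i' * Real.log (x t i'))))
    (hodey : ∀ t ≥ (0 : ℝ), ∀ j, deriv (fun s => y s j) t =
      y t j * (β₂ * ((∑ i, x t i * B i j) - ∑ i, ∑ j', x t i * B i j' * y t j')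
        - α₂ * (Real.log (y t j) - ∑ j', y t j' * Real.log (y t j')))) :
    ∀ t ≥ (0 : ℝ),
      HasDerivAt (fun s =>
        (∑ i, ∑ j, φ i j * x s i * y s j)
          + (α₁ / β₁) * (-∑ i, x s i * Real.log (x s i))
          + (α₂ / β₂) * (-∑ j, y s j * Real.log (y s j)))
        ((1 / β₁) *
          ((∑ i, x t i * (β₁ * (∑ j, A i j * y t j) - α₁ * (Real.log (x t i) + 1)) ^ 2)
            - (∑ i, x t i * (β₁ * (∑ j, A i j * y t j) - α₁ * (Real.log (x t i) + 1))) ^ 2)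
          + (1 / β₂) *
            ((∑ j, y t j * (β₂ * (∑ i, x t i * B i j) - α₂ * (Real.log (y t j) + 1)) ^ 2)
              - (∑ j, y t j * (β₂ * (∑ i, x t i * B i j) - α₂ * (Real.log (y t j) + 1))) ^ 2))
        t := by
  intro t ht
  have hxd : ∀ i, HasDerivAt (fun s => x s i) (deriv (fun s => x s i) t) t :=
    fun i => (hxdiff i t).hasDerivAt
  have hyd : ∀ j, HasDerivAt (fun s => y s j) (deriv (fun s => y s j) t) t :=
    fun j => (hydiff j t).hasDerivAt
  have hu : ∀ i, deriv (fun s => x s i) t = x t i * (β₁ * ((∑ j, A i j * y t j)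
      - ∑ k, x t k * ∑ j, A k j * y t j) - α₁ * (log (x t i) - ∑ k, x t k * log (x t k))) :=
    fun i => by rw [hodex t ht i, sum_sum_mul_mul_eq_sum_mul_sum_left]
  have hv : ∀ j, deriv (fun s => y s j) t = y t j * (β₂ * ((∑ i, x t i * B i j)
      - ∑ k, y t k * ∑ i, x t i * B i k) - α₂ * (log (y t j) - ∑ k, y t k * log (y t k))) :=
    fun j => by rw [hodey t ht j, sum_sum_mul_mul_eq_sum_mul_sum_right]
  have hφA : ∑ i, deriv (fun s => x s i) t * ∑ j, φ i j * y t j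
      = ∑ i, deriv (fun s => x s i) t * ∑ j, A i j * y t j :=
    sum_mul_eq_sum_mul_of_sub_eq_sub (sum_eq_zero_of_sql_velocity (hxsum t ht) hu) fun i i' => by
      simp only [← sum_sub_distrib, ← sub_mul, hpotA, one_mul]
  have hφB : ∑ j, deriv (fun s => y s j) t * ∑ i, x t i * φ i j
      = ∑ j, deriv (fun s => y s j) t * ∑ i, x t i * B i j :=
    sum_mul_eq_sum_mul_of_sub_eq_sub (sum_eq_zero_of_sql_velocity (hysum t ht) hv) fun j j' => by
      simp only [← sum_sub_distrib, ← mul_sub, hpotB, one_mul]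
  refine (((hasDerivAt_sum_sum_mul_mul φ hxd hyd).add
    ((hasDerivAt_sum_mul_log hxd fun i => (hxpos t ht i).ne').neg.const_mul (α₁ / β₁))).add
    ((hasDerivAt_sum_mul_log hyd fun j => (hypos t ht j).ne').neg.const_mul (α₂ / β₂))).congr_deriv ?_
  have hrate₁ := sql_payoff_entropy_rate_eq_variance (hxsum t ht) hβ₁.ne' hu
  have hrate₂ := sql_payoff_entropy_rate_eq_variance (hysum t ht) hβ₂.ne' hv
  simp only [modifiedReward] at hrate₁ hrate₂
  rw [hφA, hφB]
  linear_combination hrate₁ + hrate₂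

/-- **Variance formula for the time derivative of the modified potential.**
In an exact potential game (`w₁ = w₂ = 1`), along a trajectory `(x, y)` of the
two-player smooth Q-learning dynamics, the time derivative of the modified
potential `Φ^H(x,y) = ∑_{i,j} φ_{ij} x_i y_j + (α₁/β₁) H(x) + (α₂/β₂) H(y)`
equals the sum of the (rescaled) variances of the modified rewards
`r^H_{1,i} = β₁ (A y)_i − α₁(ln x_i + 1)` and
`r^H_{2,j} = β₂ (xᵀ B)_j − α₂(ln y_j + 1)` under the current choice
distributions. -/
theorem sql_modified_potential_derivative_variance
    {ι₁ ι₂ : Type*} [Fintype ι₁] [Fintype ι₂] [Nonempty ι₁] [Nonempty ι₂]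
    (A B φ : ι₁ → ι₂ → ℝ)
    (hpotA : ∀ i i' j, A i j - A i' j = 1 * (φ i j - φ i' j))
    (hpotB : ∀ i j j', B i j - B i j' = 1 * (φ i j - φ i j'))
    (α₁ α₂ β₁ β₂ : ℝ)
    (hα₁₀ : 0 ≤ α₁) (hα₁₁ : α₁ < 1) (hα₂₀ : 0 ≤ α₂) (hα₂₁ : α₂ < 1)
    (hβ₁ : 0 < β₁) (hβ₂ : 0 < β₂)
    (x : ℝ → ι₁ → ℝ) (y : ℝ → ι₂ → ℝ)
    (hxdiff : ∀ i, Differentiable ℝ fun t => x t i)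
    (hydiff : ∀ j, Differentiable ℝ fun t => y t j)
    (hxpos : ∀ t ≥ (0 : ℝ), ∀ i, 0 < x t i)
    (hypos : ∀ t ≥ (0 : ℝ), ∀ j, 0 < y t j)
    (hxsum : ∀ t ≥ (0 : ℝ), ∑ i, x t i = 1)
    (hysum : ∀ t ≥ (0 : ℝ), ∑ j, y t j = 1)
    (hodex : ∀ t ≥ (0 : ℝ), ∀ i, deriv (fun s => x s i) t =
      x t i * (β₁ * ((∑ j, A i j * y t j) - ∑ i', ∑ j, x t i' * A i' j * y t j)
        - α₁ * (Real.log (x t i) - ∑ i', x t i' * Real.log (x t i'))))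
    (hodey : ∀ t ≥ (0 : ℝ), ∀ j, deriv (fun s => y s j) t =
      y t j * (β₂ * ((∑ i, x t i * B i j) - ∑ i, ∑ j', x t i * B i j' * y t j')
        - α₂ * (Real.log (y t j) - ∑ j', y t j' * Real.log (y t j')))) :
    ∀ t ≥ (0 : ℝ),
      HasDerivAt (fun s =>
        (∑ i, ∑ j, φ i j * x s i * y s j)
          + (α₁ / β₁) * (-∑ i, x s i * Real.log (x s i))
          + (α₂ / β₂) * (-∑ j, y s j * Real.log (y s j)))
        ((1 / β₁) *
          ((∑ i, x t i * (β₁ * (∑ j, A i j * y t j) - α₁ * (Real.log (x t i) + 1)) ^ 2)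
            - (∑ i, x t i * (β₁ * (∑ j, A i j * y t j) - α₁ * (Real.log (x t i) + 1))) ^ 2)
          + (1 / β₂) *
            ((∑ j, y t j * (β₂ * (∑ i, x t i * B i j) - α₂ * (Real.log (y t j) + 1)) ^ 2)
              - (∑ j, y t j * (β₂ * (∑ i, x t i * B i j) - α₂ * (Real.log (y t j) + 1))) ^ 2))
        t :=
  sql_modified_potential_derivative_variance_general A B φ hpotA hpotB α₁ α₂ β₁ β₂ hβ₁ hβ₂ x y
    hxdiff hydiff hxpos hypos hxsum hysum hodex hodey
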